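/- For a thick tree T with loops, the abstract structure of the sandpile group does not depend on the choice of sink: for any two vertices s and s', the sandpile groups of (T, s) and (T, s') are isomorphic; indeed both are isomorphic to the direct product, over all edges {i, j} of the underlying tree T', of the cyclic groups ℤ/e_{i,j}ℤ. -/

import Mathlib

namespace SandpilePaper

variable {V : Type*} [Fintype V] [DecidableEq V]

/-- Configurations: assignments of numbers of grains to ordinary (non-sink) vertices. -/
abbrev Conf (s : V) : Type _ := {i : V // i ≠ s} → ℕ

/-- The degree of a vertex: `deg i = ∑ j, e i j`. -/
def deg (e : V → V → ℕ) (i : V) : ℕ := ∑ j, e i j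

/-- Toppling the (unstable) vertex `i`. -/
def toppleAt (e : V → V → ℕ) (s : V) (i : {i : V // i ≠ s}) (u : Conf s) : Conf s :=
  fun j => if j = i then u i - deg e i.1 + e i.1 i.1 else u j + e i.1 j.1

/-- One toppling step: some unstable vertex topples. -/
def Topple (e : V → V → ℕ) (s : V) (u v : Conf s) : Prop :=
  ∃ i : {i : V // i ≠ s}, deg e i.1 ≤ u i ∧ v = toppleAt e s i u

/-- A configuration is stable if every ordinary vertex has fewer grains than its degree. -/
def Stable (e : V → V → ℕ) (s : V) (u : Conf s) : Prop :=
  ∀ j : {i : V // i ≠ s}, u j < deg e j.1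

/-- The underlying simple graph: edges between distinct vertices with positive multiplicity. -/
def graph (e : V → V → ℕ) : SimpleGraph V := SimpleGraph.fromRel fun i j => 0 < e i j

/-- `σ` is a stabilization map: `σ u` is stable and reached from `u` by finitely many topplings. -/
def IsStabilization (e : V → V → ℕ) (s : V) (σ : Conf s → Conf s) : Prop :=
  ∀ u, Stable e s (σ u) ∧ Relation.ReflTransGen (Topple e s) u (σ u)

/-- A stable configuration `u` is recurrent if every configuration can reach it. -/
def Recurrent (e : V → V → ℕ) (s : V) (σ : Conf s → Conf s) (u : Conf s) : Prop :=
  Stable e s u ∧ ∀ v : Conf s, ∃ w : Conf s, σ (v + w) = u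

/-- Apply a sequence of topplings. -/
def applySeq (e : V → V → ℕ) (s : V) (u : Conf s) : List {i : V // i ≠ s} → Conf s
  | [] => u
  | i :: L => applySeq e s (toppleAt e s i u) L

/-- A toppling sequence is valid if each toppled vertex is unstable when toppled. -/
def ValidSeq (e : V → V → ℕ) (s : V) (u : Conf s) : List {i : V // i ≠ s} → Prop
  | [] => True
  | i :: L => deg e i.1 ≤ u i ∧ ValidSeq e s (toppleAt e s i u) L

/-- `succeq e s i j` means `i ⪰ j`: `j` lies on the unique path from `i` to the sink `s`. -/
def succeq (e : V → V → ℕ) (s i j : V) : Prop :=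
  (graph e).dist i s = (graph e).dist i j + (graph e).dist j s

noncomputable instance (e : V → V → ℕ) (s i j : V) : Decidable (succeq e s i j) := Nat.decEq _ _

/-- `p` assigns to each ordinary vertex its parent: its neighbor on the path to the sink. -/
def IsParent (e : V → V → ℕ) (s : V) (p : {i : V // i ≠ s} → V) : Prop :=
  ∀ j : {i : V // i ≠ s}, (graph e).Adj j.1 (p j) ∧
    (graph e).dist (p j) s + 1 = (graph e).dist j.1 s

/-- The set `{i : i ⪰ j}`. -/
noncomputable def descendants (e : V → V → ℕ) (s : V) (j : {i : V // i ≠ s}) :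
    Finset {i : V // i ≠ s} :=
  Finset.univ.filter fun i => succeq e s i.1 j.1

/-- The set `{i : i ≻ j}`. -/
noncomputable def strictDescendants (e : V → V → ℕ) (s : V) (j : {i : V // i ≠ s}) :
    Finset {i : V // i ≠ s} :=
  Finset.univ.filter fun i => i ≠ j ∧ succeq e s i.1 j.1

/-- `j` is a leaf: its parent is its only neighbor in the underlying tree. -/
def IsLeaf (e : V → V → ℕ) (s : V) (p : {i : V // i ≠ s} → V) (j : {i : V // i ≠ s}) : Prop :=
  ∀ k : V, (graph e).Adj j.1 k → k = p j

/-- Rows of the toppling matrix `Δ`. -/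
def deltaRow (e : V → V → ℕ) (s : V) (i j : {i : V // i ≠ s}) : ℤ :=
  if i = j then (deg e i.1 : ℤ) - (e i.1 i.1 : ℤ) else -(e i.1 j.1 : ℤ)

/-- The lattice `Λ` spanned by the rows of the toppling matrix. -/
def lattice (e : V → V → ℕ) (s : V) : AddSubgroup ({i : V // i ≠ s} → ℤ) :=
  AddSubgroup.closure (Set.range (deltaRow e s))

/-- The map `φ(u)_j = ∑_{i ⪰ j} u_i (mod e_{j,p(j)})`. -/
noncomputable def phi (e : V → V → ℕ) (s : V) (p : {i : V // i ≠ s} → V) (u : Conf s)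
    (j : {i : V // i ≠ s}) : ZMod (e j.1 (p j)) :=
  ∑ i ∈ descendants e s j, (u i : ZMod (e j.1 (p j)))

/-- The map `φ` on integer vectors. -/
noncomputable def phiZ (e : V → V → ℕ) (s : V) (p : {i : V // i ≠ s} → V) (u : {i : V // i ≠ s} → ℤ)
    (j : {i : V // i ≠ s}) : ZMod (e j.1 (p j)) :=
  ∑ i ∈ descendants e s j, (u i : ZMod (e j.1 (p j)))



/-!
Fix for every non-sink vertex `j` its parent `p j`, the neighbour of `j` towards the sink, and
put `c j = e j (p j)`. Toppling any vertex changes the number of grains in the subtree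
`{i | i ⪰ j}` by `0` or `± c j`, so `phi u j = ∑_{i ⪰ j} u i (mod c j)` is invariant under
toppling and additive; hence `phi (σ (u + v)) = phi u + phi v`.

Dhar's criterion (no forbidden subconfiguration, applied to the subtrees) shows that the
recurrent configurations are exactly the box `deg j - c j ≤ u j < deg j`. On a box of side
lengths `c j`, `phi` is injective because it is triangular with respect to `⪰`, and so it is
bijective onto `∏ j, ZMod (c j)` by counting. Finally `j ↦ {j, p j}` identifies the non-sink
vertices with the edges, so this group does not depend on the sink.
-/

section Toppling

variable {e : V → V → ℕ} {s : V}

lemma toppleAt_of_ne {u : Conf s} {i j : {i : V // i ≠ s}} (h : j ≠ i) :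
    toppleAt e s i u j = u j + e i.1 j.1 := if_neg h

lemma toppleAt_self {u : Conf s} {i : {i : V // i ≠ s}} :
    toppleAt e s i u i = u i - deg e i.1 + e i.1 i.1 := if_pos rfl

lemma toppleAt_comm {u : Conf s} {i i' : {i : V // i ≠ s}} (hi : deg e i.1 ≤ u i)
    (hi' : deg e i'.1 ≤ u i') :
    toppleAt e s i (toppleAt e s i' u) = toppleAt e s i' (toppleAt e s i u) := by
  rcases eq_or_ne i i' with rfl | hne
  · rfl
  funext j
  rcases eq_or_ne j i with rfl | hji
  · rw [toppleAt_self, toppleAt_of_ne hne, toppleAt_of_ne hne, toppleAt_self]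
    omega
  rcases eq_or_ne j i' with rfl | hji'
  · rw [toppleAt_of_ne hji, toppleAt_self, toppleAt_self, toppleAt_of_ne hji]
    omega
  · rw [toppleAt_of_ne hji, toppleAt_of_ne hji', toppleAt_of_ne hji', toppleAt_of_ne hji]
    omega

lemma toppleAt_add {u : Conf s} {i : {i : V // i ≠ s}} (hi : deg e i.1 ≤ u i) (w : Conf s) :
    toppleAt e s i (u + w) = toppleAt e s i u + w := by
  funext j
  by_cases hj : j = i <;> simp only [toppleAt, hj, if_true, if_false, Pi.add_apply] <;> omega

lemma Topple.add_right {u v : Conf s} (h : Topple e s u v) (w : Conf s) :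
    Topple e s (u + w) (v + w) := by
  obtain ⟨i, hi, rfl⟩ := h
  exact ⟨i, hi.trans (Nat.le_add_right _ _), (toppleAt_add hi w).symm⟩

lemma le_toppleAt_of_ne {u : Conf s} {i j : {i : V // i ≠ s}} (h : j ≠ i) :
    u j ≤ toppleAt e s i u j := by
  rw [toppleAt_of_ne h]
  exact Nat.le_add_right _ _

/-- An unstable vertex has to topple on the way to a stable configuration, and it may as well
topple first: topplings of distinct unstable vertices commute. -/
lemma reflTransGen_toppleAt {u z : Conf s} (hz : Stable e s z)
    (h : Relation.ReflTransGen (Topple e s) u z) {i : {i : V // i ≠ s}} (hi : deg e i.1 ≤ u i) :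
    Relation.ReflTransGen (Topple e s) (toppleAt e s i u) z := by
  induction h using Relation.ReflTransGen.head_induction_on generalizing i with
  | refl => exact absurd (hz i) (not_lt.2 hi)
  | head hstep _ ih =>
    obtain ⟨a, ha, rfl⟩ := hstep
    by_cases hai : i = a
    · subst hai
      assumption
    · have hi' : deg e i.1 ≤ toppleAt e s a _ i := hi.trans (le_toppleAt_of_ne hai)
      have ha' : deg e a.1 ≤ toppleAt e s i _ a := ha.trans (le_toppleAt_of_ne (Ne.symm hai))
      have h := ih hi'
      rw [toppleAt_comm hi ha] at h
      exact Relation.ReflTransGen.head ⟨a, ha', rfl⟩ h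

lemma eq_of_reflTransGen_of_stable {u z₁ z₂ : Conf s}
    (h₁ : Relation.ReflTransGen (Topple e s) u z₁) (hz₁ : Stable e s z₁)
    (h₂ : Relation.ReflTransGen (Topple e s) u z₂) (hz₂ : Stable e s z₂) : z₁ = z₂ := by
  induction h₁ using Relation.ReflTransGen.head_induction_on with
  | refl =>
    rcases h₂.cases_head with rfl | ⟨_, ⟨i, hi, -⟩, -⟩
    · rfl
    · exact absurd (hz₁ i) (not_lt.2 hi)
  | head hstep _ ih =>
    obtain ⟨a, ha, rfl⟩ := hstep
    exact ih (reflTransGen_toppleAt hz₂ h₂ ha)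

variable {σ : Conf s → Conf s}

lemma IsStabilization.eq_of_reflTransGen (hσ : IsStabilization e s σ) {u z : Conf s}
    (h : Relation.ReflTransGen (Topple e s) u z) (hz : Stable e s z) : σ u = z :=
  eq_of_reflTransGen_of_stable (hσ u).2 (hσ u).1 h hz

lemma IsStabilization.apply_apply_add (hσ : IsStabilization e s σ) (u w : Conf s) :
    σ (σ u + w) = σ (u + w) := by
  refine (hσ.eq_of_reflTransGen ?_ (hσ _).1).symm
  exact ((hσ u).2.lift (· + w) fun _ _ h => h.add_right w).trans (hσ _).2

lemma Recurrent.apply_add (hσ : IsStabilization e s σ) {u : Conf s}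
    (hu : Recurrent e s σ u) (v : Conf s) : Recurrent e s σ (σ (u + v)) := by
  refine ⟨(hσ _).1, fun x => ?_⟩
  obtain ⟨w, hw⟩ := hu.2 x
  exact ⟨w + v, by rw [← add_assoc, ← hσ.apply_apply_add, hw]⟩

end Toppling

section Forbidden

variable {e : V → V → ℕ} {s : V}

/-- Dhar's forbidden subconfigurations; loops count towards the grains a vertex receives. -/
def IsForbidden (e : V → V → ℕ) (s : V) (A : Finset {i : V // i ≠ s}) (u : Conf s) : Prop :=
  A.Nonempty ∧ ∀ k ∈ A, u k < ∑ i ∈ A, e i.1 k.1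

/-- Toppling cannot create a forbidden subconfiguration: if `A` is forbidden after `a` topples,
then `A`, or `A` without `a`, was forbidden before. -/
lemma IsForbidden.exists_of_toppleAt {u : Conf s} {a : {i : V // i ≠ s}}
    (ha : deg e a.1 ≤ u a) {A : Finset {i : V // i ≠ s}}
    (hA : IsForbidden e s A (toppleAt e s a u)) : ∃ B, IsForbidden e s B u := by
  by_cases haA : a ∈ A
  · have hsum (k) : ∑ i ∈ A, e i.1 k = e a.1 k + ∑ i ∈ A.erase a, e i.1 k :=
      (Finset.add_sum_erase A (fun i => e i.1 k) haA).symm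
    refine ⟨A.erase a, ?_, fun k hk => ?_⟩
    · have h := hA.2 a haA
      rw [toppleAt_self, hsum] at h
      have hpos : 0 < ∑ i ∈ A.erase a, e i.1 a.1 := by omega
      exact Finset.nonempty_of_sum_ne_zero hpos.ne'
    · have h := hA.2 k (Finset.mem_of_mem_erase hk)
      rw [toppleAt_of_ne (Finset.ne_of_mem_erase hk), hsum] at h
      omega
  · refine ⟨A, hA.1, fun k hk => (le_toppleAt_of_ne ?_).trans_lt (hA.2 k hk)⟩
    rintro rfl
    exact haA hk

lemma IsForbidden.exists_of_reflTransGen {u z : Conf s}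
    (h : Relation.ReflTransGen (Topple e s) u z) {A : Finset {i : V // i ≠ s}}
    (hA : IsForbidden e s A z) : ∃ B, IsForbidden e s B u := by
  induction h using Relation.ReflTransGen.head_induction_on with
  | refl => exact ⟨A, hA⟩
  | head hstep _ ih =>
    obtain ⟨a, ha, rfl⟩ := hstep
    obtain ⟨B, hB⟩ := ih
    exact hB.exists_of_toppleAt ha

omit [DecidableEq V] in
lemma sum_le_deg (hsym : ∀ i j : V, e i j = e j i) (A : Finset {i : V // i ≠ s}) (k : V) :
    ∑ i ∈ A, e i.1 k ≤ deg e k := by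
  calc ∑ i ∈ A, e i.1 k = ∑ i ∈ A.map (Function.Embedding.subtype _), e k i := by
        simp [hsym k]
    _ ≤ deg e k := Finset.sum_le_sum_of_subset (Finset.subset_univ _)

omit [DecidableEq V] in
lemma not_isForbidden_of_deg_le (hsym : ∀ i j : V, e i j = e j i) {u : Conf s}
    (hu : ∀ k, deg e k.1 ≤ u k) (A : Finset {i : V // i ≠ s}) : ¬ IsForbidden e s A u := by
  rintro ⟨⟨k, hk⟩, hA⟩
  exact (hA k hk).not_ge ((sum_le_deg hsym A k.1).trans (hu k))

lemma IsStabilization.not_isForbidden (hsym : ∀ i j : V, e i j = e j i) {σ : Conf s → Conf s}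
    (hσ : IsStabilization e s σ) {X : Conf s} (hX : ∀ k, deg e k.1 ≤ X k)
    (A : Finset {i : V // i ≠ s}) : ¬ IsForbidden e s A (σ X) := fun hA =>
  have ⟨B, hB⟩ := hA.exists_of_reflTransGen (hσ X).2
  not_isForbidden_of_deg_le hsym hX B hB

lemma Recurrent.not_isForbidden (hsym : ∀ i j : V, e i j = e j i) {σ : Conf s → Conf s}
    (hσ : IsStabilization e s σ) {u : Conf s} (hu : Recurrent e s σ u)
    (A : Finset {i : V // i ≠ s}) : ¬ IsForbidden e s A u := by
  obtain ⟨w, rfl⟩ := hu.2 fun k => deg e k.1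
  exact hσ.not_isForbidden hsym (fun k => Nat.le_add_right _ _) A

end Forbidden

section TreeGeometry

omit [Fintype V] [DecidableEq V]

variable {G : SimpleGraph V}

lemma _root_.SimpleGraph.Connected.exists_adj_dist_add_one (hG : G.Connected) {x y : V}
    (h : x ≠ y) : ∃ q, G.Adj x q ∧ G.dist q y + 1 = G.dist x y := by
  obtain ⟨w, hw⟩ := (hG x y).exists_walk_length_eq_dist
  cases w with
  | nil => exact absurd rfl h
  | @cons _ q _ hadj w' =>
    refine ⟨_, hadj, le_antisymm ?_ ?_⟩
    · rw [← hw, SimpleGraph.Walk.length_cons]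
      exact Nat.add_le_add_right (SimpleGraph.dist_le w') 1
    · have := hG.dist_triangle (u := x) (v := q) (w := y)
      rw [SimpleGraph.dist_eq_one_iff_adj.2 hadj] at this
      omega

lemma _root_.SimpleGraph.IsTree.eq_of_adj_of_dist_add_one (hG : G.IsTree) {x y k₁ k₂ : V}
    (h₁ : G.Adj x k₁) (h₂ : G.Adj x k₂) (hd₁ : G.dist k₁ y + 1 = G.dist x y)
    (hd₂ : G.dist k₂ y + 1 = G.dist x y) : k₁ = k₂ := by
  obtain ⟨w₁, hw₁⟩ := (hG.connected k₁ y).exists_walk_length_eq_dist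
  obtain ⟨w₂, hw₂⟩ := (hG.connected k₂ y).exists_walk_length_eq_dist
  have hpath {k : V} (h : G.Adj x k) (w : G.Walk k y) (hw : w.length + 1 = G.dist x y) :
      (SimpleGraph.Walk.cons h w).IsPath :=
    SimpleGraph.Walk.isPath_of_length_eq_dist _ (by rw [SimpleGraph.Walk.length_cons, hw])
  have := (hG.existsUnique_path x y).unique (hpath h₁ w₁ (hw₁ ▸ hd₁))
    (hpath h₂ w₂ (hw₂ ▸ hd₂))
  simpa using congrArg SimpleGraph.Walk.snd this

end TreeGeometry

section RootedTree

open SimpleGraph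

variable {e : V → V → ℕ} {s : V} {p : {i : V // i ≠ s} → V}

omit [Fintype V] [DecidableEq V] in
lemma exists_isParent (hconn : (graph e).Connected) (s : V) : ∃ p, IsParent e s p := by
  choose p hp using fun j : {i : V // i ≠ s} => hconn.exists_adj_dist_add_one j.2
  exact ⟨p, hp⟩

omit [Fintype V] [DecidableEq V] in
lemma graph_adj_of_pos {x y : V} (hxy : x ≠ y) (h : 0 < e x y) : (graph e).Adj x y :=
  (fromRel_adj _ _ _).2 ⟨hxy, Or.inl h⟩

omit [Fintype V] [DecidableEq V] in
lemma IsParent.pos (hsym : ∀ i j : V, e i j = e j i) (hp : IsParent e s p)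
    (j : {i : V // i ≠ s}) : 0 < e j.1 (p j) := by
  obtain ⟨-, h | h⟩ := (fromRel_adj _ _ _).1 (hp j).1
  · exact h
  · rwa [hsym]

omit [Fintype V] [DecidableEq V] in
lemma IsParent.eq_or_succeq_of_adj (htree : (graph e).IsTree) (hp : IsParent e s p)
    {j : {i : V // i ≠ s}} {k : V} (hadj : (graph e).Adj j.1 k) :
    k = p j ∨ succeq e s k j.1 := by
  rcases htree.dist_eq_dist_add_one_of_adj s hadj with h | h <;>
    rw [dist_comm, dist_comm (u := s)] at h
  · exact Or.inl (htree.eq_of_adj_of_dist_add_one hadj (hp j).1 h.symm (hp j).2)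
  · right
    rw [succeq, h, dist_eq_one_iff_adj.2 hadj.symm]
    omega

omit [Fintype V] [DecidableEq V] in
lemma succeq_refl (j : V) : succeq e s j j := by
  rw [succeq, dist_self, zero_add]

omit [Fintype V] [DecidableEq V] in
lemma succeq_trans (hconn : (graph e).Connected) {i j k : V} (hij : succeq e s i j)
    (hjk : succeq e s j k) : succeq e s i k := by
  have := hconn.dist_triangle (u := i) (v := k) (w := s)
  have := hconn.dist_triangle (u := i) (v := j) (w := k)
  rw [succeq] at *
  omega

omit [Fintype V] [DecidableEq V] in
lemma dist_lt_of_succeq (hconn : (graph e).Connected) {i j : V} (h : succeq e s i j)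
    (hne : i ≠ j) : (graph e).dist j s < (graph e).dist i s := by
  have := hconn.pos_dist_of_ne hne
  rw [succeq] at h
  omega

omit [Fintype V] [DecidableEq V] in
lemma ne_of_succeq (hconn : (graph e).Connected) {i j : V} (h : succeq e s i j) (hj : j ≠ s) :
    i ≠ s := by
  rintro rfl
  have := hconn.pos_dist_of_ne hj
  rw [succeq, dist_self, dist_comm] at h
  omega

omit [Fintype V] [DecidableEq V] in
lemma IsParent.not_succeq (hp : IsParent e s p) (j : {i : V // i ≠ s}) :
    ¬ succeq e s (p j) j.1 := by
  have := (hp j).2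
  rw [succeq]
  omega

omit [Fintype V] [DecidableEq V] in
/-- The first step of a geodesic from `i` to `j` also brings `i` closer to the root, so it is
the parent. -/
lemma IsParent.succeq_of_succeq (htree : (graph e).IsTree) (hp : IsParent e s p)
    {i : {i : V // i ≠ s}} {j : V} (h : succeq e s i.1 j) (hne : i.1 ≠ j) :
    succeq e s (p i) j := by
  obtain ⟨q, hq, hqj⟩ := htree.connected.exists_adj_dist_add_one hne
  have h₁ := htree.connected.dist_triangle (u := q) (v := j) (w := s)
  have h₂ := htree.connected.dist_triangle (u := i.1) (v := q) (w := s)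
  rw [dist_eq_one_iff_adj.2 hq] at h₂
  rw [succeq] at h ⊢
  have hqs : (graph e).dist q s + 1 = (graph e).dist i.1 s := by omega
  rw [← htree.eq_of_adj_of_dist_add_one hq (hp i).1 hqs (hp i).2]
  omega

lemma mem_descendants {i j : {i : V // i ≠ s}} :
    i ∈ descendants e s j ↔ succeq e s i.1 j.1 := by
  simp [descendants]

lemma sum_descendants_eq (hconn : (graph e).Connected) {M : Type*} [AddCommMonoid M]
    (f : V → M) (j : {i : V // i ≠ s}) :
    ∑ k ∈ descendants e s j, f k.1 = ∑ k with succeq e s k j.1, f k := by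
  have hmap : (descendants e s j).map (Function.Embedding.subtype _) =
      Finset.univ.filter (succeq e s · j.1) := by
    ext k
    simp only [descendants, Finset.mem_map, Finset.mem_filter, Finset.mem_univ, true_and,
      Function.Embedding.subtype_apply]
    exact ⟨fun ⟨k', hk', hk⟩ => hk ▸ hk',
      fun hk => ⟨⟨k, ne_of_succeq hconn hk j.2⟩, hk, rfl⟩⟩
  rw [← hmap, Finset.sum_map]
  rfl

end RootedTree

section SubtreeSums

open SimpleGraph

variable {e : V → V → ℕ} {s : V} {p : {i : V // i ≠ s} → V}

lemma IsParent.sum_descendants_add (htree : (graph e).IsTree) (hp : IsParent e s p)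
    (j : {i : V // i ≠ s}) :
    ∑ k ∈ descendants e s j, e j.1 k.1 + e j.1 (p j) = deg e j.1 := by
  rw [sum_descendants_eq htree.connected, deg,
    ← Finset.sum_filter_add_sum_filter_not Finset.univ (succeq e s · j.1)]
  congr 1
  refine (Finset.sum_eq_single_of_mem (p j) (by simpa using hp.not_succeq j) ?_).symm
  intro k hk hkp
  simp only [Finset.mem_filter, Finset.mem_univ, true_and] at hk
  by_contra h0
  have hjk : j.1 ≠ k := by rintro rfl; exact hk (succeq_refl _)
  rcases hp.eq_or_succeq_of_adj htree (graph_adj_of_pos hjk (Nat.pos_of_ne_zero h0)) with h | h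
  · exact hkp h
  · exact hk h

lemma IsParent.sum_descendants_of_succeq (htree : (graph e).IsTree) (hp : IsParent e s p)
    {i j : {i : V // i ≠ s}} (h : succeq e s i.1 j.1) (hne : i.1 ≠ j.1) :
    ∑ k ∈ descendants e s j, e i.1 k.1 = deg e i.1 := by
  rw [sum_descendants_eq htree.connected, deg]
  refine Finset.sum_subset (Finset.subset_univ _) fun k _ hk => ?_
  simp only [Finset.mem_filter, Finset.mem_univ, true_and] at hk
  by_contra h0
  have hik : i.1 ≠ k := by rintro rfl; exact hk h
  rcases hp.eq_or_succeq_of_adj htree (graph_adj_of_pos hik (Nat.pos_of_ne_zero h0)) with hk' | hk'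
  · exact hk (hk' ▸ hp.succeq_of_succeq htree h hne)
  · exact hk (succeq_trans htree.connected hk' h)

lemma IsParent.sum_descendants_of_not_succeq (hsym : ∀ i j : V, e i j = e j i)
    (htree : (graph e).IsTree) (hp : IsParent e s p) {i : V} {j : {i : V // i ≠ s}}
    (h : ¬ succeq e s i j.1) :
    ∑ k ∈ descendants e s j, e i k.1 = if i = p j then e j.1 (p j) else 0 := by
  have hadj {k : V} (hk : succeq e s k j.1) (h0 : e i k ≠ 0) : (graph e).Adj k i := by
    refine graph_adj_of_pos (by rintro rfl; exact h hk) ?_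
    rw [hsym]
    exact Nat.pos_of_ne_zero h0
  rw [sum_descendants_eq htree.connected,
    Finset.sum_eq_single_of_mem j.1 (by simpa using succeq_refl j.1) ?_]
  · split_ifs with hi
    · rw [hi, hsym]
    · by_contra h0
      rcases hp.eq_or_succeq_of_adj htree (hadj (succeq_refl _) h0) with h' | h'
      · exact hi h'
      · exact h h'
  · intro k hk hkj
    simp only [Finset.mem_filter, Finset.mem_univ, true_and] at hk
    by_contra h0
    rcases hp.eq_or_succeq_of_adj htree (j := ⟨k, ne_of_succeq htree.connected hk j.2⟩)
      (hadj hk h0) with h' | h'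
    · exact h (h' ▸ hp.succeq_of_succeq htree hk hkj)
    · exact h (succeq_trans htree.connected h' hk)

end SubtreeSums

section Invariant

variable {e : V → V → ℕ} {s : V} {p : {i : V // i ≠ s} → V}

lemma phi_add (u v : Conf s) : phi e s p (u + v) = phi e s p u + phi e s p v := by
  funext j
  simp only [phi, Pi.add_apply, Nat.cast_add, Finset.sum_add_distrib]

lemma natCast_toppleAt {R : Type*} [AddCommGroupWithOne R] {u : Conf s} {a : {i : V // i ≠ s}}
    (ha : deg e a.1 ≤ u a) (k : {i : V // i ≠ s}) :
    ((toppleAt e s a u k : ℕ) : R) = u k + e a.1 k.1 - if k = a then (deg e a.1 : R) else 0 := by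
  rcases eq_or_ne k a with rfl | hk
  · rw [toppleAt_self, if_pos rfl, Nat.cast_add, Nat.cast_sub ha]
    abel
  · rw [toppleAt_of_ne hk, if_neg hk, Nat.cast_add, sub_zero]

lemma IsParent.natCast_sum_descendants (hsym : ∀ i j : V, e i j = e j i)
    (htree : (graph e).IsTree) (hp : IsParent e s p) (i j : {i : V // i ≠ s}) :
    ((∑ k ∈ descendants e s j, e i.1 k.1 : ℕ) : ZMod (e j.1 (p j))) =
      if i ∈ descendants e s j then (deg e i.1 : ZMod (e j.1 (p j))) else 0 := by
  by_cases hij : succeq e s i.1 j.1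
  · rw [if_pos (mem_descendants.2 hij)]
    rcases eq_or_ne i j with rfl | hne
    · rw [← hp.sum_descendants_add htree i, Nat.cast_add, ZMod.natCast_self, add_zero]
    · rw [hp.sum_descendants_of_succeq htree hij (Subtype.coe_ne_coe.2 hne)]
  · rw [if_neg (mt mem_descendants.1 hij), hp.sum_descendants_of_not_succeq hsym htree hij]
    split_ifs
    · exact ZMod.natCast_self _
    · exact Nat.cast_zero

lemma IsParent.phi_toppleAt (hsym : ∀ i j : V, e i j = e j i) (htree : (graph e).IsTree)
    (hp : IsParent e s p) {u : Conf s} {a : {i : V // i ≠ s}} (ha : deg e a.1 ≤ u a) :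
    phi e s p (toppleAt e s a u) = phi e s p u := by
  funext j
  have h := hp.natCast_sum_descendants hsym htree a j
  rw [Nat.cast_sum] at h
  simp only [phi, natCast_toppleAt ha, Finset.sum_sub_distrib, Finset.sum_add_distrib,
    Finset.sum_ite_eq', h, add_sub_cancel_right]

lemma IsParent.phi_eq_of_reflTransGen (hsym : ∀ i j : V, e i j = e j i)
    (htree : (graph e).IsTree) (hp : IsParent e s p) {u z : Conf s}
    (h : Relation.ReflTransGen (Topple e s) u z) : phi e s p z = phi e s p u := by
  induction h with
  | refl => rfl
  | tail _ hstep ih =>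
    obtain ⟨a, ha, rfl⟩ := hstep
    rw [hp.phi_toppleAt hsym htree ha, ih]

lemma IsParent.phi_stabilization_add (hsym : ∀ i j : V, e i j = e j i)
    (htree : (graph e).IsTree) (hp : IsParent e s p) {σ : Conf s → Conf s}
    (hσ : IsStabilization e s σ) (u v : Conf s) :
    phi e s p (σ (u + v)) = phi e s p u + phi e s p v := by
  rw [hp.phi_eq_of_reflTransGen hsym htree (hσ _).2, phi_add]

end Invariant

section Box

variable {e : V → V → ℕ} {s : V} {p : {i : V // i ≠ s} → V}

noncomputable def box (e : V → V → ℕ) (s : V) (p : {i : V // i ≠ s} → V) (L : Conf s) :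
    Finset (Conf s) :=
  Fintype.piFinset fun j => Finset.Ico (L j) (L j + e j.1 (p j))

lemma mem_box {L u : Conf s} :
    u ∈ box e s p L ↔ ∀ j, L j ≤ u j ∧ u j < L j + e j.1 (p j) := by
  simp [box]

lemma card_box (L : Conf s) : (box e s p L).card = ∏ j, e j.1 (p j) := by
  simp [box]

omit [Fintype V] [DecidableEq V] in
lemma eq_of_natCast_eq_of_le_of_lt {m L a b : ℕ} (ha : L ≤ a) (ha' : a < L + m) (hb : L ≤ b)
    (hb' : b < L + m) (h : (a : ZMod m) = b) : a = b :=
  ((ZMod.natCast_eq_natCast_iff a b m).1 h).eq_of_abs_lt (by rw [abs_sub_lt_iff]; omega)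

/-- `phi` is triangular: at a deepest coordinate where `u` and `v` differ, all the other terms
of the subtree sum agree. -/
lemma phi_injOn_box (hconn : (graph e).Connected) (L : Conf s) :
    Set.InjOn (phi e s p) (box e s p L) := by
  intro u hu v hv huv
  by_contra hne
  obtain ⟨j, hj, hmax⟩ := Finset.exists_max_image (Finset.univ.filter fun j => u j ≠ v j)
    (fun j => (graph e).dist j.1 s)
    (by simpa [Finset.filter_nonempty_iff] using Function.ne_iff.1 hne)
  simp only [Finset.mem_filter, Finset.mem_univ, true_and] at hj hmax
  have hdesc : ∀ i ∈ (descendants e s j).erase j, u i = v i := by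
    intro i hi
    by_contra hi'
    have := dist_lt_of_succeq hconn (mem_descendants.1 (Finset.mem_of_mem_erase hi))
      (Subtype.coe_ne_coe.2 (Finset.ne_of_mem_erase hi))
    exact (hmax i hi').not_gt this
  have hj' : (u j : ZMod (e j.1 (p j))) = v j := by
    have h := congrFun huv j
    have hjj : j ∈ descendants e s j := mem_descendants.2 (succeq_refl _)
    simp only [phi] at h
    rw [← Finset.add_sum_erase _ _ hjj, ← Finset.add_sum_erase _ _ hjj,
      Finset.sum_congr rfl fun i hi => by rw [hdesc i hi]] at h
    exact add_right_cancel h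
  exact hj (eq_of_natCast_eq_of_le_of_lt (mem_box.1 hu j).1 (mem_box.1 hu j).2
    (mem_box.1 hv j).1 (mem_box.1 hv j).2 hj')

/-- By counting: `phi` is injective on the box, which has as many elements as the target. -/
lemma IsParent.phi_surjOn_box (hsym : ∀ i j : V, e i j = e j i) (htree : (graph e).IsTree)
    (hp : IsParent e s p) (L : Conf s) : Set.SurjOn (phi e s p) (box e s p L) Set.univ := by
  have : ∀ j, NeZero (e j.1 (p j)) := fun j => ⟨(hp.pos hsym j).ne'⟩
  have himage : (box e s p L).image (phi e s p) = Finset.univ := by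
    refine Finset.eq_univ_of_card _ ?_
    rw [Finset.card_image_of_injOn (phi_injOn_box htree.connected L), card_box, Fintype.card_pi]
    simp
  intro t _
  obtain ⟨u, hu, rfl⟩ := Finset.mem_image.1 (himage ▸ Finset.mem_univ t)
  exact ⟨u, hu, rfl⟩

lemma IsParent.isForbidden_descendants (hsym : ∀ i j : V, e i j = e j i)
    (htree : (graph e).IsTree) (hp : IsParent e s p) {u : Conf s} (hu : Stable e s u)
    {j : {i : V // i ≠ s}} (hj : u j < deg e j.1 - e j.1 (p j)) :
    IsForbidden e s (descendants e s j) u := by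
  refine ⟨⟨j, mem_descendants.2 (succeq_refl _)⟩, fun k hk => ?_⟩
  rw [Finset.sum_congr rfl fun i _ => hsym i.1 k.1]
  rcases eq_or_ne k j with rfl | hkj
  · have := hp.sum_descendants_add htree k
    omega
  · rw [hp.sum_descendants_of_succeq htree (mem_descendants.1 hk) (Subtype.coe_ne_coe.2 hkj)]
    exact hu k

lemma IsParent.mem_box_of_stable (hsym : ∀ i j : V, e i j = e j i) (htree : (graph e).IsTree)
    (hp : IsParent e s p) {u : Conf s} (hu : Stable e s u)
    (hA : ∀ A, ¬ IsForbidden e s A u) : u ∈ box e s p fun j => deg e j.1 - e j.1 (p j) := by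
  refine mem_box.2 fun j => ⟨?_, ?_⟩
  · by_contra h
    exact hA _ (hp.isForbidden_descendants hsym htree hu (not_le.1 h))
  · have := hp.sum_descendants_add htree j
    have := hu j
    omega

lemma IsParent.recurrent_iff_mem_box (hsym : ∀ i j : V, e i j = e j i)
    (htree : (graph e).IsTree) (hp : IsParent e s p) {σ : Conf s → Conf s}
    (hσ : IsStabilization e s σ) {u : Conf s} :
    Recurrent e s σ u ↔ u ∈ box e s p fun j => deg e j.1 - e j.1 (p j) := by
  refine ⟨fun hu => hp.mem_box_of_stable hsym htree hu.1 (hu.not_isForbidden hsym hσ),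
    fun hu => ⟨fun j => ?_, fun v => ?_⟩⟩
  · have := mem_box.1 hu j
    have := hp.sum_descendants_add htree j
    omega
  obtain ⟨X, hX, hXu⟩ := hp.phi_surjOn_box hsym htree (fun j => max (v j) (deg e j.1))
    (Set.mem_univ (phi e s p u))
  have hX' (j) : v j ≤ X j ∧ deg e j.1 ≤ X j := max_le_iff.1 (mem_box.1 hX j).1
  refine ⟨X - v, ?_⟩
  have hvX : v + (X - v) = X := funext fun j => Nat.add_sub_cancel' (hX' j).1
  rw [hvX]
  refine phi_injOn_box htree.connected _ ?_ hu ?_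
  · exact hp.mem_box_of_stable hsym htree (hσ X).1 (hσ.not_isForbidden hsym fun j => (hX' j).2)
  · rw [hp.phi_eq_of_reflTransGen hsym htree (hσ X).2, hXu]

lemma IsParent.phi_bijOn (hsym : ∀ i j : V, e i j = e j i) (htree : (graph e).IsTree)
    (hp : IsParent e s p) {σ : Conf s → Conf s} (hσ : IsStabilization e s σ) :
    Set.BijOn (phi e s p) {u | Recurrent e s σ u} Set.univ := by
  have : {u | Recurrent e s σ u} = box e s p fun j => deg e j.1 - e j.1 (p j) :=
    Set.ext fun u => hp.recurrent_iff_mem_box hsym htree hσ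
  rw [this]
  exact ⟨Set.mapsTo_univ _ _, phi_injOn_box htree.connected _, hp.phi_surjOn_box hsym htree _⟩

end Box

section Edges

open SimpleGraph

variable {e : V → V → ℕ} {s : V} {p : {i : V // i ≠ s} → V}

def IsParent.edge (hp : IsParent e s p) (j : {i : V // i ≠ s}) : (graph e).edgeSet :=
  ⟨s(j.1, p j), (hp j).1⟩

omit [Fintype V] [DecidableEq V] in
lemma IsParent.injective_edge (hp : IsParent e s p) : Function.Injective hp.edge := by
  intro j j' h
  rcases Sym2.eq_iff.1 (congrArg Subtype.val h) with ⟨h, -⟩ | ⟨h, h'⟩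
  · exact Subtype.ext h
  · have h₁ := (hp j).2
    have h₂ := (hp j').2
    rw [h', h] at h₁
    omega

omit [Fintype V] [DecidableEq V] in
/-- Of the two endpoints of an edge, the one farther from the root is the child. -/
lemma IsParent.surjective_edge (htree : (graph e).IsTree) (hp : IsParent e s p) :
    Function.Surjective hp.edge := by
  have key {x y : V} (hxy : (graph e).Adj x y) (h : (graph e).dist s x = (graph e).dist s y + 1) :
      ∃ j : {i : V // i ≠ s}, s(j.1, p j) = s(x, y) := by
    have hx : x ≠ s := by rintro rfl; rw [dist_self] at h; omega
    rw [dist_comm, dist_comm (u := s)] at h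
    refine ⟨⟨x, hx⟩, ?_⟩
    rw [htree.eq_of_adj_of_dist_add_one (hp ⟨x, hx⟩).1 hxy (hp ⟨x, hx⟩).2 h.symm]
  rintro ⟨a, ha⟩
  induction a with
  | h x y =>
    rw [mem_edgeSet] at ha
    rcases htree.dist_eq_dist_add_one_of_adj s ha with h | h
    · obtain ⟨j, hj⟩ := key ha h
      exact ⟨j, Subtype.ext hj⟩
    · obtain ⟨j, hj⟩ := key ha.symm h
      exact ⟨j, Subtype.ext (hj.trans Sym2.eq_swap)⟩

noncomputable def IsParent.edgeEquiv (htree : (graph e).IsTree) (hp : IsParent e s p) :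
    {i : V // i ≠ s} ≃ (graph e).edgeSet :=
  Equiv.ofBijective hp.edge ⟨hp.injective_edge, hp.surjective_edge htree⟩

/-- `phi` with its coordinates transported from vertices to the edges towards their parents;
the moduli agree definitionally, `Sym2.lift ⟨e, hsym⟩ s(j, p j) = e j (p j)`. -/
noncomputable def IsParent.phiEdges (hsym : ∀ i j : V, e i j = e j i)
    (htree : (graph e).IsTree) (hp : IsParent e s p) (u : Conf s) :
    ∀ a : (graph e).edgeSet, ZMod (Sym2.lift ⟨e, hsym⟩ a.1) :=
  RingEquiv.piCongrLeft (fun a : (graph e).edgeSet => ZMod (Sym2.lift ⟨e, hsym⟩ a.1))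
    (hp.edgeEquiv htree) (phi e s p u)

lemma IsParent.phiEdges_bijOn (hsym : ∀ i j : V, e i j = e j i) (htree : (graph e).IsTree)
    (hp : IsParent e s p) {σ : Conf s → Conf s} (hσ : IsStabilization e s σ) :
    Set.BijOn (hp.phiEdges hsym htree) {u | Recurrent e s σ u} Set.univ :=
  (Set.bijOn_univ.2 (RingEquiv.bijective _)).comp (hp.phi_bijOn hsym htree hσ)

lemma IsParent.phiEdges_stabilization_add (hsym : ∀ i j : V, e i j = e j i)
    (htree : (graph e).IsTree) (hp : IsParent e s p) {σ : Conf s → Conf s}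
    (hσ : IsStabilization e s σ) (u v : Conf s) :
    hp.phiEdges hsym htree (σ (u + v)) = hp.phiEdges hsym htree u + hp.phiEdges hsym htree v := by
  unfold IsParent.phiEdges
  rw [hp.phi_stabilization_add hsym htree hσ]
  exact map_add (RingEquiv.piCongrLeft _ (hp.edgeEquiv htree)) _ _

end Edges

lemma exists_bijOn_of_bijOn_univ {α β γ : Type*} [Add γ] [Nonempty β] {A : Set α} {B : Set β}
    {opA : α → α → α} {opB : β → β → β} {F : α → γ} {G : β → γ}
    (hF : Set.BijOn F A Set.univ) (hG : Set.BijOn G B Set.univ)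
    (hB : ∀ x ∈ B, ∀ y ∈ B, opB x y ∈ B)
    (hFop : ∀ u ∈ A, ∀ v ∈ A, F (opA u v) = F u + F v)
    (hGop : ∀ x ∈ B, ∀ y ∈ B, G (opB x y) = G x + G y) :
    ∃ H : α → β, Set.BijOn H A B ∧
      ∀ u ∈ A, ∀ v ∈ A, H (opA u v) = opB (H u) (H v) := by
  have hinv (c : γ) : Function.invFunOn G B c ∈ B ∧ G (Function.invFunOn G B c) = c :=
    Function.invFunOn_pos (hG.surjOn (Set.mem_univ c))
  refine ⟨Function.invFunOn G B ∘ F, ⟨fun u _ => (hinv _).1, ?_, ?_⟩, ?_⟩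
  · intro u hu v hv h
    apply hF.injOn hu hv
    rw [← (hinv (F u)).2, ← (hinv (F v)).2]
    exact congrArg G h
  · intro x hx
    obtain ⟨u, hu, hux⟩ := hF.surjOn (Set.mem_univ (G x))
    exact ⟨u, hu, hG.injOn (hinv _).1 hx (by rw [(hinv _).2, hux])⟩
  · intro u hu v hv
    apply hG.injOn (hinv _).1 (hB _ (hinv _).1 _ (hinv _).1)
    rw [(hinv _).2, hGop _ (hinv _).1 _ (hinv _).1, (hinv _).2, (hinv _).2]
    exact hFop u hu v hv

theorem stmt_6 (e : V → V → ℕ) (hsym : ∀ i j : V, e i j = e j i)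
    (htree : (graph e).IsTree) (s s' : V)
    (σ : Conf s → Conf s) (hσ : IsStabilization e s σ)
    (σ' : Conf s' → Conf s') (hσ' : IsStabilization e s' σ') :
    (∃ F : Conf s → ∀ a : (graph e).edgeSet, ZMod (Sym2.lift ⟨e, hsym⟩ a.1),
      Set.BijOn F {u | Recurrent e s σ u} Set.univ ∧
      ∀ u v, Recurrent e s σ u → Recurrent e s σ v → F (σ (u + v)) = F u + F v) ∧
    (∃ F' : Conf s' → ∀ a : (graph e).edgeSet, ZMod (Sym2.lift ⟨e, hsym⟩ a.1),
      Set.BijOn F' {u | Recurrent e s' σ' u} Set.univ ∧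
      ∀ u v, Recurrent e s' σ' u → Recurrent e s' σ' v → F' (σ' (u + v)) = F' u + F' v) ∧
    (∃ H : Conf s → Conf s',
      Set.BijOn H {u | Recurrent e s σ u} {u | Recurrent e s' σ' u} ∧
      ∀ u v, Recurrent e s σ u → Recurrent e s σ v → H (σ (u + v)) = σ' (H u + H v)) := by
  obtain ⟨p, hp⟩ := exists_isParent htree.connected s
  obtain ⟨p', hp'⟩ := exists_isParent htree.connected s'
  have hF := hp.phiEdges_bijOn hsym htree hσ
  have hF' := hp'.phiEdges_bijOn hsym htree hσ'
  have hadd := hp.phiEdges_stabilization_add hsym htree hσ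
  have hadd' := hp'.phiEdges_stabilization_add hsym htree hσ'
  obtain ⟨H, hH, hHadd⟩ := exists_bijOn_of_bijOn_univ hF hF'
    (fun x hx y _ => hx.apply_add hσ' y)
    (fun u _ v _ => hadd u v) (fun x _ y _ => hadd' x y)
  exact ⟨⟨_, hF, fun u v _ _ => hadd u v⟩, ⟨_, hF', fun u v _ _ => hadd' u v⟩,
    ⟨H, hH, fun u v hu hv => hHadd u hu v hv⟩⟩

end SandpilePaper
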